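/- arXiv:1203.5690 — 4 statements merged into one kernel-verified Lean document; each statement's English description precedes it below -/
import Mathlib

section
/- Let r, n, m, a, b, i be positive integers with 1 ≤ n ≤ r-2, 0 ≤ m ≤ r-2, a ≥ 2, b ≥ 1, i ≤ r+1, satisfying i = (r+1)b - (r-n-1)(ab-1) and r+1 = ia - (r-m-1)(ab-1). Then a ≤ m+2, a(r-n-1) ≤ r, b ≤ n+1+i-r, and b(r-m-1) ≤ i-1. -/
/-!
Adding `a` times the first relation to the second leaves `(a b - 1) ((r - m - 1) - (r + 1 - a (r - n - 1))) = 0`.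
Since `a b ≠ 1`, this forces `a (r - n - 1) = m + 2`, and the first relation then becomes
`i = b (r - m - 1) + (r - n - 1)`. All four bounds are read off these two identities, using
`r - n - 1 ≥ 1` and `r - m - 1 ≥ 1`.
-/

section Numerology

variable {R : Type*} [CommRing R] [NoZeroDivisors R] {r n m a b i : R}

theorem mul_codim_eq_of_numerology (hab : a * b ≠ 1)
    (h1 : i = (r + 1) * b - (r - n - 1) * (a * b - 1))
    (h2 : r + 1 = i * a - (r - m - 1) * (a * b - 1)) :
    a * (r - n - 1) = m + 2 := by
  have hkey : (a * b - 1) * ((r - m - 1) - (r + 1 - (r - n - 1) * a)) = 0 := by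
    linear_combination a * h1 + h2
  have := (mul_eq_zero.mp hkey).resolve_left (sub_ne_zero.mpr hab)
  linear_combination this

theorem index_eq_of_numerology (hab : a * b ≠ 1)
    (h1 : i = (r + 1) * b - (r - n - 1) * (a * b - 1))
    (h2 : r + 1 = i * a - (r - m - 1) * (a * b - 1)) :
    i = b * (r - m - 1) + (r - n - 1) := by
  linear_combination h1 - b * mul_codim_eq_of_numerology hab h1 h2

end Numerology

theorem stmt_1_general (r n m a b i : ℤ)
    (hn2 : n ≤ r - 2) (hm2 : m ≤ r - 2)
    (ha : 2 ≤ a) (hb : 1 ≤ b)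
    (h1 : i = (r + 1) * b - (r - n - 1) * (a * b - 1))
    (h2 : r + 1 = i * a - (r - m - 1) * (a * b - 1)) :
    a ≤ m + 2 ∧ a * (r - n - 1) ≤ r ∧ b ≤ n + 1 + i - r ∧ b * (r - m - 1) ≤ i - 1 := by
  have hab : a * b ≠ 1 := by nlinarith
  have hcodim := mul_codim_eq_of_numerology hab h1 h2
  have hindex := index_eq_of_numerology hab h1 h2
  have hb_le : b ≤ b * (r - m - 1) := le_mul_of_one_le_right (by omega) (by omega)
  refine ⟨?_, by omega, by omega, by omega⟩
  calc a ≤ a * (r - n - 1) := le_mul_of_one_le_right (by omega) (by omega)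
    _ = m + 2 := hcodim

theorem stmt_1 (r n m a b i : ℤ)
    (hr : 0 < r) (hn1 : 1 ≤ n) (hn2 : n ≤ r - 2) (hm1 : 0 ≤ m) (hm2 : m ≤ r - 2)
    (ha : 2 ≤ a) (hb : 1 ≤ b) (hi : 0 < i) (hi2 : i ≤ r + 1)
    (h1 : i = (r + 1) * b - (r - n - 1) * (a * b - 1))
    (h2 : r + 1 = i * a - (r - m - 1) * (a * b - 1)) :
    a ≤ m + 2 ∧ a * (r - n - 1) ≤ r ∧ b ≤ n + 1 + i - r ∧ b * (r - m - 1) ≤ i - 1 :=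
  stmt_1_general r n m a b i hn2 hm2 ha hb h1 h2
end

section
/- Let r, m, a, b, i be positive integers with a ≥ 2, b ≥ 1, 0 ≤ m ≤ r-2, r ≥ 3, satisfying a(r-n-1) = m+2 with n = 1 and b(r-m-1) = n+2+i-r-1 with n = 1 and i ≤ r+1 and i = (r+1)b - (r-2)(ab-1). Then exactly one of the following holds: (r,a,m) = (4,2,2) with b ∈ {1,2,3} and i = b+2; (r,a,m) = (3,3,1) with b ∈ {1,2,3} and i = b+1; or (r,a,m) = (3,2,0) with b = 1 and i = 3. -/
/-! Since `a ≥ 2`, the first relation gives `2 (r - 2) ≤ a (r - 2) = m + 2 ≤ r`, so `r ∈ {3, 4}`,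
and then it pins down `(a, m)`. The second relation reads `i = b (r - m - 1) + r - 2`, and
`i ≤ r + 1` bounds `b`. -/

theorem r_le_four_of_mul_sub_two_eq {r m a : ℤ} (ha : 2 ≤ a) (hr : 2 ≤ r) (hm : m ≤ r - 2)
    (h : a * (r - 2) = m + 2) : r ≤ 4 := by
  nlinarith

theorem stmt_2_general (r m a b i : ℤ)
    (ha : 2 ≤ a) (hb : 1 ≤ b) (hm2 : m ≤ r - 2) (hr : 3 ≤ r)
    (hile : i ≤ r + 1)
    (h1 : a * (r - 1 - 1) = m + 2)
    (h2 : b * (r - m - 1) = 1 + 2 + i - r - 1) :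
    (r = 4 ∧ a = 2 ∧ m = 2 ∧ (b = 1 ∨ b = 2 ∨ b = 3) ∧ i = b + 2) ∨
    (r = 3 ∧ a = 3 ∧ m = 1 ∧ (b = 1 ∨ b = 2 ∨ b = 3) ∧ i = b + 1) ∨
    (r = 3 ∧ a = 2 ∧ m = 0 ∧ b = 1 ∧ i = 3) := by
  have hr4 : r ≤ 4 := r_le_four_of_mul_sub_two_eq ha (by omega) hm2 (by rw [← h1]; ring)
  obtain rfl | rfl : r = 3 ∨ r = 4 := by omega
  · obtain rfl | rfl : m = 0 ∨ m = 1 := by omega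
    all_goals omega
  · obtain rfl : m = 2 := by omega
    omega

theorem stmt_2 (r m a b i : ℤ)
    (ha : 2 ≤ a) (hb : 1 ≤ b) (hm1 : 0 ≤ m) (hm2 : m ≤ r - 2) (hr : 3 ≤ r)
    (hi : 0 < i) (hile : i ≤ r + 1)
    (h1 : a * (r - 1 - 1) = m + 2)
    (h2 : b * (r - m - 1) = 1 + 2 + i - r - 1)
    (h3 : i = (r + 1) * b - (r - 2) * (a * b - 1)) :
    (r = 4 ∧ a = 2 ∧ m = 2 ∧ (b = 1 ∨ b = 2 ∨ b = 3) ∧ i = b + 2) ∨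
    (r = 3 ∧ a = 3 ∧ m = 1 ∧ (b = 1 ∨ b = 2 ∨ b = 3) ∧ i = b + 1) ∨
    (r = 3 ∧ a = 2 ∧ m = 0 ∧ b = 1 ∧ i = 3) :=
  stmt_2_general r m a b i ha hb hm2 hr hile h1 h2
end

section
/- Let d, g, z be integers with d ≥ 1, z ∈ {3,4,5}, satisfying g = (z + 5d - 25)/2 (an integer) and 3z² - 2z(3(2d² - 25d + 77) + 2(2d - 9)) + 3d⁴ - 86d³ + 914d² - 4266d + 7371 = 0. Then (z,d,g) = (3,6,4) or (z,d,g) = (4,5,2); the case z = 5 admits no positive integer solution d. -/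
/-!
Read as a quartic in `d`, the equation has, after the substitutions `d = 4 - t` and `d = 13 + t`,
only nonnegative coefficients in `t` as soon as `z ≤ 5`, with a positive constant term. Hence every
integer root satisfies `5 ≤ d ≤ 12`, and the finitely many remaining cases are checked directly;
`g` is then read off from `2g = z + 5d - 25`.
-/

section

variable {R : Type*} [CommRing R] [LinearOrder R] [IsStrictOrderedRing R]

/-- The left-hand side of the equation `N_{4,4} = 0`. -/
def n44 (z d : R) : R :=
  3 * z ^ 2 - 2 * z * (3 * (2 * d ^ 2 - 25 * d + 77) + 2 * (2 * d - 9))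
    + 3 * d ^ 4 - 86 * d ^ 3 + 914 * d ^ 2 - 4266 * d + 7371

theorem n44_pos_of_le_four {z d : R} (hz : z ≤ 5) (hd : d ≤ 4) : 0 < n44 z d := by
  obtain ⟨t, ht, rfl⟩ : ∃ t : R, 0 ≤ t ∧ d = 4 - t := ⟨4 - d, by linarith, by ring⟩
  have taylor : n44 z (4 - t) = (35 - 3 * z) * (5 - z) + 20 + (314 - 46 * z) * t
      + (170 - 12 * z) * t ^ 2 + 38 * t ^ 3 + 3 * t ^ 4 := by
    unfold n44; ring
  rw [taylor]
  have h0 := mul_nonneg (by linarith : (0 : R) ≤ 35 - 3 * z) (by linarith : (0 : R) ≤ 5 - z)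
  have h1 := mul_nonneg (by linarith : (0 : R) ≤ 314 - 46 * z) ht
  have h2 := mul_nonneg (by linarith : (0 : R) ≤ 170 - 12 * z) (sq_nonneg t)
  linarith [pow_nonneg ht 3, pow_nonneg ht 4]

theorem n44_pos_of_thirteen_le {z d : R} (hz : z ≤ 5) (hd : 13 ≤ d) : 0 < n44 z d := by
  obtain ⟨t, ht, rfl⟩ : ∃ t : R, 0 ≤ t ∧ d = 13 + t := ⟨d - 13, by linarith, by ring⟩
  have taylor : n44 z (13 + t) = (593 - 3 * z) * (5 - z) + 155 + (2260 - 170 * z) * t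
      + (602 - 12 * z) * t ^ 2 + 70 * t ^ 3 + 3 * t ^ 4 := by
    unfold n44; ring
  rw [taylor]
  have h0 := mul_nonneg (by linarith : (0 : R) ≤ 593 - 3 * z) (by linarith : (0 : R) ≤ 5 - z)
  have h1 := mul_nonneg (by linarith : (0 : R) ≤ 2260 - 170 * z) ht
  have h2 := mul_nonneg (by linarith : (0 : R) ≤ 602 - 12 * z) (sq_nonneg t)
  linarith [pow_nonneg ht 3, pow_nonneg ht 4]

end

theorem stmt_11_general (d g z : ℤ)
    (hz : z = 3 ∨ z = 4 ∨ z = 5)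
    (hg : 2 * g = z + 5 * d - 25)
    (heq : 3 * z ^ 2 - 2 * z * (3 * (2 * d ^ 2 - 25 * d + 77) + 2 * (2 * d - 9))
        + 3 * d ^ 4 - 86 * d ^ 3 + 914 * d ^ 2 - 4266 * d + 7371 = 0) :
    ((z = 3 ∧ d = 6 ∧ g = 4) ∨ (z = 4 ∧ d = 5 ∧ g = 2)) ∧ z ≠ 5 := by
  have hroot : n44 z d = 0 := heq
  have hz5 : z ≤ 5 := by omega
  have hd5 : 5 ≤ d := by
    by_contra! h
    exact (n44_pos_of_le_four hz5 (by omega)).ne' hroot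
  have hd12 : d ≤ 12 := by
    by_contra! h
    exact (n44_pos_of_thirteen_le hz5 (by omega)).ne' hroot
  rcases hz with rfl | rfl | rfl <;> interval_cases d <;> omega

theorem stmt_11 (d g z : ℤ)
    (hd : 1 ≤ d) (hz : z = 3 ∨ z = 4 ∨ z = 5)
    (hg : 2 * g = z + 5 * d - 25)
    (heq : 3 * z ^ 2 - 2 * z * (3 * (2 * d ^ 2 - 25 * d + 77) + 2 * (2 * d - 9))
        + 3 * d ^ 4 - 86 * d ^ 3 + 914 * d ^ 2 - 4266 * d + 7371 = 0) :
    ((z = 3 ∧ d = 6 ∧ g = 4) ∨ (z = 4 ∧ d = 5 ∧ g = 2)) ∧ z ≠ 5 :=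
  stmt_11_general d g z hz hg heq
end

section
/- Let r, n, m, a, b, i be positive integers with n = 3, 1 ≤ n ≤ r-2, 0 ≤ m ≤ r-2, a ≥ 2, b ≥ 1, i ≤ r+1, satisfying a(r - 4) = m + 2 and b(r - m - 1) = 4 + i - r and i = (r+1)b - (r-4)(ab-1). Then (r, a, m) is one of: (8, 2, 6), (7, 2, 4), (6, 3, 4), (6, 2, 2), (5, 5, 3), (5, 4, 2), (5, 3, 1), (5, 2, 0). -/
theorem le_two_mul_add_two_of_mul_sub_eq {r n m a : ℤ} (ha : 2 ≤ a) (hrn : n + 1 ≤ r)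
    (h : a * (r - n - 1) = m + 2) (hm : m ≤ r - 2) : r ≤ 2 * n + 2 := by
  have : 2 * (r - n - 1) ≤ a * (r - n - 1) := mul_le_mul_of_nonneg_right ha (by omega)
  omega

theorem stmt_14_general (r n m a : ℤ)
    (hn : n = 3) (hn2 : n ≤ r - 2) (hm1 : 0 ≤ m) (hm2 : m ≤ r - 2)
    (ha : 2 ≤ a)
    (h1 : a * (r - 4) = m + 2) :
    (r = 8 ∧ a = 2 ∧ m = 6) ∨ (r = 7 ∧ a = 2 ∧ m = 4) ∨ (r = 6 ∧ a = 3 ∧ m = 4) ∨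
    (r = 6 ∧ a = 2 ∧ m = 2) ∨ (r = 5 ∧ a = 5 ∧ m = 3) ∨ (r = 5 ∧ a = 4 ∧ m = 2) ∨
    (r = 5 ∧ a = 3 ∧ m = 1) ∨ (r = 5 ∧ a = 2 ∧ m = 0) := by
  subst hn
  have hr_le : r ≤ 8 :=
    le_two_mul_add_two_of_mul_sub_eq (n := 3) ha (by omega) (by rw [← h1]; ring) hm2
  have hr_ge : 5 ≤ r := by omega
  interval_cases r <;> omega

theorem stmt_14 (r n m a b i : ℤ)
    (hn : n = 3) (hn1 : 1 ≤ n) (hn2 : n ≤ r - 2) (hm1 : 0 ≤ m) (hm2 : m ≤ r - 2)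
    (ha : 2 ≤ a) (hb : 1 ≤ b) (hi : 0 < i) (hile : i ≤ r + 1)
    (h1 : a * (r - 4) = m + 2)
    (h2 : b * (r - m - 1) = 4 + i - r)
    (h3 : i = (r + 1) * b - (r - 4) * (a * b - 1)) :
    (r = 8 ∧ a = 2 ∧ m = 6) ∨ (r = 7 ∧ a = 2 ∧ m = 4) ∨ (r = 6 ∧ a = 3 ∧ m = 4) ∨
    (r = 6 ∧ a = 2 ∧ m = 2) ∨ (r = 5 ∧ a = 5 ∧ m = 3) ∨ (r = 5 ∧ a = 4 ∧ m = 2) ∨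
    (r = 5 ∧ a = 3 ∧ m = 1) ∨ (r = 5 ∧ a = 2 ∧ m = 0) :=
  stmt_14_general r n m a hn hn2 hm1 hm2 ha h1
end
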